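/- arXiv:2007.15893 — 6 statements merged into one kernel-verified Lean document; each statement's English description precedes it below -/
import Mathlib

section
/- Let Φ : M_n(ℂ) → M_n(ℂ) be an entanglement breaking channel with rank-one Kraus operators {v_i w_i*}_{i=1}^d (so ‖v_i‖ = 1, w_i ≠ 0, Σ_i w_i w_i* = I, and Φ(ρ) = Σ_i (w_i* ρ w_i) v_i v_i*). Suppose the rank-one projection P = v v* (for some unit vector v ∈ ℂ^n) belongs to the multiplicative domain M_{Φ†} of the dual map Φ†. Then Φ privatizes the ∗-algebra A = span{ w_i w_j* : P v_i = v_i and P v_j = v_j } to P; that is, Φ(A) = tr(A) P for every A ∈ A. -/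
open Matrix

section Helpers
variable {n : ℕ}

private lemma vmv_mulVec (a b x : Fin n → ℂ) : vecMulVec a b *ᵥ x = (b ⬝ᵥ x) • a := by
  ext i; simp [vecMulVec_apply, mulVec, dotProduct, Finset.mul_sum, mul_comm, mul_left_comm]

private lemma mul_vmv (M : Matrix (Fin n) (Fin n) ℂ) (a b : Fin n → ℂ) :
    M * vecMulVec a b = vecMulVec (M *ᵥ a) b := by
  ext i j; simp [vecMulVec_apply, mul_apply, mulVec, dotProduct, Finset.sum_mul, mul_assoc]

private lemma vmv_mul (M : Matrix (Fin n) (Fin n) ℂ) (a b : Fin n → ℂ) :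
    vecMulVec a b * M = vecMulVec a (b ᵥ* M) := by
  ext i j; simp [vecMulVec_apply, mul_apply, vecMul, dotProduct, Finset.mul_sum, mul_assoc]

private lemma vmv_mul_vmv (a b c e : Fin n → ℂ) :
    vecMulVec a b * vecMulVec c e = (b ⬝ᵥ c) • vecMulVec a e := by
  ext i j; simp [vecMulVec_apply, mul_apply, dotProduct, Finset.sum_mul, Finset.mul_sum]
  exact Finset.sum_congr rfl fun k _ => by ring

private lemma vmv_conjT (a b : Fin n → ℂ) :
    (vecMulVec a b)ᴴ = vecMulVec (star b) (star a) := by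
  ext i j; simp [vecMulVec_apply, conjTranspose_apply, Pi.star_apply, mul_comm]

private lemma trace_vmv (a b : Fin n → ℂ) : (vecMulVec a b).trace = b ⬝ᵥ a := by
  simp [trace, vecMulVec_apply, dotProduct, diag, mul_comm]

private lemma vmv_smul_left (c : ℂ) (a b : Fin n → ℂ) :
    vecMulVec (c • a) b = c • vecMulVec a b := by
  ext i j; simp [vecMulVec_apply, mul_assoc]

private lemma vmv_smul_right (c : ℂ) (a b : Fin n → ℂ) :
    vecMulVec a (c • b) = c • vecMulVec a b := by
  ext i j; simp [vecMulVec_apply]; ring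

private lemma vec_ne_zero_of_dot (a : Fin n → ℂ) (h : star a ⬝ᵥ a = 1) : a ≠ 0 := by
  intro h0; rw [h0] at h; simp at h

private lemma sum_mulVec' {d : ℕ} (y : Fin n → ℂ) (M : Fin d → Matrix (Fin n) (Fin n) ℂ) :
    (∑ k, M k) *ᵥ y = ∑ k, M k *ᵥ y := by
  ext i
  simp only [mulVec, dotProduct, Matrix.sum_apply, Finset.sum_apply, Finset.sum_mul]
  rw [Finset.sum_comm]

private lemma dotProduct_sum' {d : ℕ} (x : Fin n → ℂ) (u : Fin d → (Fin n → ℂ)) :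
    x ⬝ᵥ (∑ k, u k) = ∑ k, x ⬝ᵥ u k := by
  simp only [dotProduct, Finset.sum_apply, Finset.mul_sum]
  rw [Finset.sum_comm]

private lemma dot_sum_mulVec {d : ℕ} (x y : Fin n → ℂ) (M : Fin d → Matrix (Fin n) (Fin n) ℂ) :
    x ⬝ᵥ ((∑ k, M k) *ᵥ y) = ∑ k, x ⬝ᵥ (M k *ᵥ y) := by
  rw [sum_mulVec', dotProduct_sum']

end Helpers

/-- **Theorem: private algebras from rank-one projections in the
multiplicative domain.** Let `Φ(ρ) = Σ_i (w_i* ρ w_i) v_i v_i*` be an entanglement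
breaking channel with rank-one Kraus operators `v_i w_i*` (`‖v_i‖ = 1`, `w_i ≠ 0`,
`Σ_i w_i w_i* = I`), with dual map `Φ†(X) = Σ_i (v_i* X v_i) w_i w_i*`. If the rank-one
projection `P = v v*` (for a unit vector `v`) lies in the multiplicative domain of `Φ†`,
then `Φ` privatizes the ∗-algebra `A = span{ w_i w_j* : P v_i = v_i, P v_j = v_j }` to
`P`: `Φ(A) = tr(A) P` for all `A ∈ A`. -/
theorem eb_channel_privatizes_algebra_of_rankOne_projection {n d : ℕ}
    (Φ Φd : Matrix (Fin n) (Fin n) ℂ → Matrix (Fin n) (Fin n) ℂ)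
    (v' w : Fin d → (Fin n → ℂ))
    (hv' : ∀ i, star (v' i) ⬝ᵥ v' i = 1)
    (hw : ∀ i, w i ≠ 0)
    (hTP : ∑ i, Matrix.vecMulVec (w i) (star (w i)) = 1)
    (hΦ : ∀ X, Φ X = ∑ i, (star (w i) ⬝ᵥ (X *ᵥ w i)) • Matrix.vecMulVec (v' i) (star (v' i)))
    (hΦd : ∀ X, Φd X = ∑ i, (star (v' i) ⬝ᵥ (X *ᵥ v' i)) • Matrix.vecMulVec (w i) (star (w i)))
    (v : Fin n → ℂ) (hv : star v ⬝ᵥ v = 1)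
    (P : Matrix (Fin n) (Fin n) ℂ) (hP : P = Matrix.vecMulVec v (star v))
    (hPdom : ∀ X, Φd (P * X) = Φd P * Φd X ∧ Φd (X * P) = Φd X * Φd P) :
    ∀ A ∈ Submodule.span ℂ
        {M : Matrix (Fin n) (Fin n) ℂ | ∃ i j,
          P *ᵥ v' i = v' i ∧ P *ᵥ v' j = v' j ∧
          M = Matrix.vecMulVec (w i) (star (w j))},
      Φ A = A.trace • P := by
  set H : Matrix (Fin n) (Fin n) ℂ := Φd P with hH
  set lam : Fin d → ℂ := fun k => star (v' k) ⬝ᵥ v with hlam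
  -- basic facts
  have hP2 : P * P = P := by
    rw [hP, vmv_mul_vmv, hv, one_smul]
  have hHrep : H = ∑ k, (lam k * star (lam k)) • vecMulVec (w k) (star (w k)) := by
    rw [hH, hΦd P]
    refine Finset.sum_congr rfl fun k _ => ?_
    congr 1
    rw [hP, vmv_mulVec, dotProduct_smul]
    have h2 : star v ⬝ᵥ v' k = star (lam k) := by
      rw [hlam]; exact star_dotProduct _ _
    rw [h2]
    show star (lam k) • (lam k) = lam k * star (lam k)
    rw [smul_eq_mul]; ring
  have hHherm : Hᴴ = H := by
    rw [hHrep, conjTranspose_sum]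
    refine Finset.sum_congr rfl fun k _ => ?_
    rw [conjTranspose_smul, vmv_conjT, star_star]
    congr 1
    simp [mul_comm]
  have hH2 : H * H = H := by
    have := (hPdom P).1
    rw [hP2] at this
    exact this.symm
  -- the matrices D k and their sum of squares
  set D : Fin d → Matrix (Fin n) (Fin n) ℂ :=
    fun k => lam k • vecMulVec (w k) (star v) - vecMulVec (H *ᵥ w k) (star (v' k)) with hD
  have hDsum : ∑ k, D k * (D k)ᴴ = 0 := by
    have expand : ∀ k, D k * (D k)ᴴ =
        (lam k * star (lam k)) • vecMulVec (w k) (star (w k))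
        - (lam k * star (lam k)) • (vecMulVec (w k) (star (w k)) * Hᴴ)
        - (lam k * star (lam k)) • (H * vecMulVec (w k) (star (w k)))
        + H * vecMulVec (w k) (star (w k)) * Hᴴ := by
      intro k
      rw [hD]
      simp only [conjTranspose_sub, conjTranspose_smul, vmv_conjT, star_star]
      rw [sub_mul, mul_sub, mul_sub]
      rw [smul_mul_assoc, smul_mul_assoc, mul_smul_comm, mul_smul_comm]
      rw [vmv_mul_vmv, vmv_mul_vmv, vmv_mul_vmv, vmv_mul_vmv]
      have e1 : star v ⬝ᵥ v = 1 := hv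
      have e2 : star v ⬝ᵥ v' k = star (lam k) := star_dotProduct _ _
      have e3 : star (v' k) ⬝ᵥ v = lam k := rfl
      have e4 : star (v' k) ⬝ᵥ v' k = 1 := hv' k
      rw [e1, e2, e3, e4]
      have hBB : vecMulVec (H *ᵥ w k) (star (H *ᵥ w k))
          = H * vecMulVec (w k) (star (w k)) * Hᴴ := by
        rw [star_mulVec, ← vmv_mul, ← mul_vmv]
      have hB : vecMulVec (H *ᵥ w k) (star (w k)) = H * vecMulVec (w k) (star (w k)) :=
        (mul_vmv H _ _).symm
      have hBt : vecMulVec (w k) (star (H *ᵥ w k)) = vecMulVec (w k) (star (w k)) * Hᴴ := by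
        rw [star_mulVec, vmv_mul]
      rw [hBB, hB, hBt]
      module
    rw [Finset.sum_congr rfl fun k _ => expand k]
    simp only [Finset.sum_add_distrib, Finset.sum_sub_distrib]
    have g2 : ∑ k, (lam k * star (lam k)) • (vecMulVec (w k) (star (w k)) * Hᴴ)
        = H * Hᴴ := by
      rw [show H * Hᴴ = (∑ k, (lam k * star (lam k)) • vecMulVec (w k) (star (w k))) * Hᴴ by
        rw [← hHrep]]
      rw [Finset.sum_mul]
      exact Finset.sum_congr rfl fun k _ => (smul_mul_assoc _ _ _).symm
    have g3 : ∑ k, (lam k * star (lam k)) • (H * vecMulVec (w k) (star (w k)))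
        = H * H := by
      rw [show H * H = H * (∑ k, (lam k * star (lam k)) • vecMulVec (w k) (star (w k))) by
        rw [← hHrep]]
      rw [Finset.mul_sum]
      exact Finset.sum_congr rfl fun k _ => (mul_smul_comm _ _ _).symm
    have g4 : ∑ k, H * vecMulVec (w k) (star (w k)) * Hᴴ = H * Hᴴ := by
      rw [← Finset.sum_mul, ← Finset.mul_sum, hTP, mul_one]
    rw [g2, g3, g4, ← hHrep, hHherm, hH2]
    abel
  -- each D k vanishes
  have hD0 : ∀ k, D k = 0 := by
    have htr : ∑ k, ∑ a, ∑ b, Complex.normSq (D k a b) = 0 := by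
      have h1 := congrArg trace hDsum
      rw [trace_sum, trace_zero] at h1
      have h2 : ∀ k, (D k * (D k)ᴴ).trace = ∑ a, ∑ b, (Complex.normSq (D k a b) : ℂ) := by
        intro k
        simp [trace, diag, mul_apply, conjTranspose_apply, Complex.mul_conj]
      rw [Finset.sum_congr rfl fun k _ => h2 k] at h1
      exact_mod_cast h1
    intro k
    ext a b
    have hk := (Finset.sum_eq_zero_iff_of_nonneg (fun k _ => Finset.sum_nonneg fun a _ => Finset.sum_nonneg fun b _ => Complex.normSq_nonneg _)).mp htr k
      (Finset.mem_univ k)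
    have ha := (Finset.sum_eq_zero_iff_of_nonneg
      (fun a _ => Finset.sum_nonneg fun b _ => Complex.normSq_nonneg _)).mp hk a
      (Finset.mem_univ a)
    have hb := (Finset.sum_eq_zero_iff_of_nonneg
      (fun b _ => Complex.normSq_nonneg _)).mp ha b (Finset.mem_univ b)
    simpa using Complex.normSq_eq_zero.mp hb
  have hDK : ∀ k, lam k • vecMulVec (w k) (star v) = vecMulVec (H *ᵥ w k) (star (v' k)) :=
    fun k => sub_eq_zero.mp (hD0 k)
  -- eigenvector facts
  have hHw1 : ∀ k, lam k ≠ 0 → H *ᵥ w k = w k := by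
    intro k hk
    have := congrArg (· *ᵥ v) (hDK k)
    simp only [smul_mulVec, vmv_mulVec, hv, one_smul] at this
    have h3 : star (v' k) ⬝ᵥ v = lam k := rfl
    rw [h3] at this
    exact (smul_right_injective _ hk this).symm
  have hvk1 : ∀ k, lam k ≠ 0 → v' k = star (lam k) • v := by
    intro k hk
    have h1 := hDK k
    rw [hHw1 k hk] at h1
    obtain ⟨a, ha⟩ := Function.ne_iff.mp (hw k)
    funext b
    have ha' : w k a ≠ 0 := by simpa using ha
    have h2 := congrFun (congrFun h1 a) b
    simp only [Matrix.smul_apply, vecMulVec_apply, Pi.star_apply, smul_eq_mul] at h2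
    have h3 : star (v' k b) = lam k * star (v b) := by
      apply mul_left_cancel₀ ha'
      linear_combination -h2
    calc v' k b = star (star (v' k b)) := (star_star _).symm
      _ = star (lam k * star (v b)) := by rw [h3]
      _ = star (lam k) • v b := by simp [mul_comm]
  have hHw0 : ∀ k, lam k = 0 → H *ᵥ w k = 0 := by
    intro k hk
    have h1 := (hDK k).symm
    rw [hk, zero_smul] at h1
    obtain ⟨b, hb⟩ := Function.ne_iff.mp (vec_ne_zero_of_dot (v' k) (hv' k))
    funext a
    have h2 := congrFun (congrFun h1 a) b
    simp only [vecMulVec_apply, Pi.star_apply, Matrix.zero_apply] at h2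
    have : star (v' k b) ≠ 0 := star_ne_zero.mpr (by simpa using hb)
    exact mul_eq_zero.mp h2 |>.resolve_right this
  -- eigenvalue-1 property for indices fixed by P
  have hfix : ∀ i, P *ᵥ v' i = v' i → lam i ≠ 0 := by
    intro i hi
    have h1 : (star v ⬝ᵥ v' i) • v = v' i := by rw [← vmv_mulVec, ← hP, hi]
    have hμ : star v ⬝ᵥ v' i ≠ 0 := by
      intro h0
      rw [h0, zero_smul] at h1
      exact vec_ne_zero_of_dot (v' i) (hv' i) h1.symm
    have h2 : lam i = star (star v ⬝ᵥ v' i) := by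
      rw [hlam]
      calc star (v' i) ⬝ᵥ v = star ((star v ⬝ᵥ v' i) • v) ⬝ᵥ v := by rw [h1]
        _ = star (star v ⬝ᵥ v' i) * (star v ⬝ᵥ v) := by
            simp [smul_dotProduct, star_smul, smul_eq_mul]
        _ = star (star v ⬝ᵥ v' i) := by rw [hv, mul_one]
    rw [h2]
    exact star_ne_zero.mpr hμ
  -- orthogonality with privatized indices
  have horth : ∀ k i, lam k = 0 → lam i ≠ 0 → star (w k) ⬝ᵥ w i = 0 := by
    intro k i hk hi
    have h1 : star (w k) ⬝ᵥ w i = star (w k) ⬝ᵥ (H *ᵥ w i) := by rw [hHw1 i hi]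
    rw [h1, dotProduct_mulVec, ← hHherm, ← star_mulVec, hHw0 k hk]
    simp
  -- the key per-generator computation
  have hgen : ∀ M ∈ {M : Matrix (Fin n) (Fin n) ℂ | ∃ i j,
      P *ᵥ v' i = v' i ∧ P *ᵥ v' j = v' j ∧ M = vecMulVec (w i) (star (w j))},
      Φ M = M.trace • P := by
    rintro M ⟨i, j, hi, hj, rfl⟩
    rw [hΦ, trace_vmv]
    have hcoef : ∀ k, star (w k) ⬝ᵥ (vecMulVec (w i) (star (w j)) *ᵥ w k)
        = (star (w j) ⬝ᵥ w k) * (star (w k) ⬝ᵥ w i) := by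
      intro k
      rw [vmv_mulVec, dotProduct_smul, smul_eq_mul]
    have key : ∀ k, (star (w k) ⬝ᵥ (vecMulVec (w i) (star (w j)) *ᵥ w k)) •
        vecMulVec (v' k) (star (v' k))
        = ((star (w j) ⬝ᵥ w k) * (star (w k) ⬝ᵥ w i)) • P := by
      intro k
      rw [hcoef k]
      by_cases hk : lam k = 0
      · rw [horth k i hk (hfix i hi), mul_zero, zero_smul, zero_smul]
      · congr 1
        have h1 := hvk1 k hk
        have h3 := hv' k
        rw [h1] at h3
        simp only [star_smul, star_star, smul_dotProduct, dotProduct_smul,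
          smul_eq_mul, hv] at h3
        rw [h1, hP, star_smul, star_star, vmv_smul_left, vmv_smul_right, smul_smul]
        rw [show star (lam k) * lam k = 1 by linear_combination h3, one_smul]
    rw [Finset.sum_congr rfl fun k _ => key k, ← Finset.sum_smul]
    congr 1
    have h4 : star (w j) ⬝ᵥ w i = star (w j) ⬝ᵥ ((∑ k, vecMulVec (w k) (star (w k))) *ᵥ w i) := by
      rw [hTP, one_mulVec]
    rw [dot_sum_mulVec] at h4
    rw [h4]
    refine Finset.sum_congr rfl fun k _ => ?_
    rw [vmv_mulVec, dotProduct_smul, smul_eq_mul]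
    ring
  -- span induction: linearity
  intro A hA
  induction hA using Submodule.span_induction with
  | mem x hx => exact hgen x hx
  | zero => simp [hΦ]
  | add x y hx hy px py =>
      have hadd : Φ (x + y) = Φ x + Φ y := by
        rw [hΦ, hΦ, hΦ, ← Finset.sum_add_distrib]
        exact Finset.sum_congr rfl fun k _ => by
          rw [add_mulVec, dotProduct_add, add_smul]
      rw [hadd, px, py, trace_add, add_smul]
  | smul a x hx px =>
      have hsmul : Φ (a • x) = a • Φ x := by
        rw [hΦ, hΦ, Finset.smul_sum]
        exact Finset.sum_congr rfl fun k _ => by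
          rw [smul_mulVec, dotProduct_smul, smul_smul, smul_eq_mul]
      rw [hsmul, px, trace_smul, smul_smul, smul_eq_mul]
end

section
/- Let N be a self-adjoint linear subspace of the trace-zero matrices inside M_n(ℂ) (i.e., X ∈ N implies X* ∈ N and tr(X) = 0). Then there exists an entanglement breaking quantum channel Φ : M_n(ℂ) → M_n(ℂ) whose nullspace is exactly N: Φ(X) = 0 if and only if X ∈ N. -/
/-!
Let `W` be the annihilator of `N` for the trace pairing `(A, X) ↦ tr (A X)`. As `N` is
self-adjoint and traceless, `W` is self-adjoint and contains `1`, so it is spanned by `1` and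
finitely many Hermitian matrices `Kᵢ`. Shifting each `Kᵢ` by a multiple of `1` and rescaling
gives a POVM `{F_k}` of positive definite matrices spanning `W`. For `R_k = F_k / tr F_k`,
pairing `Φ(X) = ∑ tr (F_k X) R_k` with `Xᴴ` gives `∑ |tr (F_k X)|² / tr F_k`, so `Φ(X) = 0`
exactly when every `tr (F_k X)` vanishes, i.e. when `X ∈ Wᗮ = N`.
-/

open Matrix ComplexOrder

open scoped ComplexStarModule in
theorem Submodule.exists_finset_isSelfAdjoint_span_eq {A : Type*} [AddCommGroup A] [Module ℂ A]
    [StarAddMonoid A] [StarModule ℂ A] [DecidableEq A] (W : Submodule ℂ A) (hW : W.FG)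
    (hstar : ∀ a ∈ W, star a ∈ W) :
    ∃ s : Finset A, (∀ a ∈ s, IsSelfAdjoint a) ∧ span ℂ s = W := by
  obtain ⟨t, rfl⟩ := hW
  refine ⟨t.image (fun a => (ℜ a : A)) ∪ t.image (fun a => (ℑ a : A)), ?_,
    le_antisymm ?_ ?_⟩
  · simp only [Finset.mem_union, Finset.mem_image]
    rintro _ (⟨a, -, rfl⟩ | ⟨a, -, rfl⟩)
    exacts [(ℜ a).2, (ℑ a).2]
  · have hstar_mem : ∀ a ∈ t, a ∈ span ℂ t ∧ star a ∈ span ℂ t := fun a ha =>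
      ⟨subset_span ha, hstar a (subset_span ha)⟩
    rw [span_le]
    simp only [Finset.coe_union, Finset.coe_image, Set.union_subset_iff, Set.image_subset_iff]
    constructor <;> intro a ha <;>
      simp only [Set.mem_preimage, SetLike.mem_coe, realPart_apply_coe, imaginaryPart_apply_coe]
    · exact smul_of_tower_mem _ _ (add_mem (hstar_mem a ha).1 (hstar_mem a ha).2)
    · exact smul_mem _ _ (smul_of_tower_mem _ _ (sub_mem (hstar_mem a ha).1 (hstar_mem a ha).2))
  · rw [span_le]
    intro a ha
    rw [SetLike.mem_coe, ← realPart_add_I_smul_imaginaryPart a]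
    exact add_mem (subset_span (Finset.mem_union_left _ (Finset.mem_image_of_mem _ ha)))
      (smul_mem _ _ (subset_span (Finset.mem_union_right _ (Finset.mem_image_of_mem _ ha))))

namespace Matrix

variable {n : Type*} [Fintype n]

section TraceForm

noncomputable def traceForm (K : Type*) [CommRing K] : LinearMap.BilinForm K (Matrix n n K) :=
  (LinearMap.mul K (Matrix n n K)).compr₂ (traceLinearMap n K K)

@[simp]
theorem traceForm_apply {K : Type*} [CommRing K] (A B : Matrix n n K) :
    traceForm K A B = (A * B).trace :=
  rfl

theorem traceForm_isSymm (K : Type*) [CommRing K] :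
    (traceForm K : LinearMap.BilinForm K (Matrix n n K)).IsSymm :=
  ⟨fun A B => by simp [trace_mul_comm A B]⟩

theorem traceForm_nondegenerate (K : Type*) [CommRing K] :
    (traceForm K : LinearMap.BilinForm K (Matrix n n K)).Nondegenerate :=
  ⟨fun A hA => ext_iff_trace_mul_right.mpr fun X => by simpa using hA X,
    fun B hB => ext_iff_trace_mul_left.mpr fun X => by simpa using hB X⟩

theorem orthogonal_traceForm_orthogonal {K : Type*} [Field K] (W : Submodule K (Matrix n n K)) :
    (traceForm K).orthogonal ((traceForm K).orthogonal W) = W :=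
  (traceForm K).orthogonal_orthogonal (traceForm_nondegenerate K) (traceForm_isSymm K).isRefl W

theorem one_mem_orthogonal_traceForm_iff {K : Type*} [CommRing K] [DecidableEq n]
    {N : Submodule K (Matrix n n K)} :
    1 ∈ (traceForm K).orthogonal N ↔ ∀ X ∈ N, X.trace = 0 := by
  simp

theorem conjTranspose_mem_orthogonal_traceForm {K : Type*} [CommRing K] [StarRing K]
    {N : Submodule K (Matrix n n K)} (hN : ∀ X ∈ N, Xᴴ ∈ N) {A : Matrix n n K}
    (hA : A ∈ (traceForm K).orthogonal N) : Aᴴ ∈ (traceForm K).orthogonal N := by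
  intro X hX
  have h := hA Xᴴ (hN X hX)
  simp only [traceForm_apply] at h ⊢
  rw [← conjTranspose_conjTranspose X, ← conjTranspose_mul, trace_conjTranspose, trace_mul_comm,
    h, star_zero]

theorem mem_orthogonal_traceForm_span_range_iff {K : Type*} [CommRing K] {ι : Type*}
    (F : ι → Matrix n n K) (X : Matrix n n K) :
    X ∈ (traceForm K).orthogonal (Submodule.span K (Set.range F)) ↔
      ∀ k, (F k * X).trace = 0 := by
  refine ⟨fun h k => h (F k) (Submodule.subset_span ⟨k, rfl⟩), fun h Y hY => ?_⟩
  have hle : Submodule.span K (Set.range F) ≤ LinearMap.ker ((traceForm K).flip X) :=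
    Submodule.span_le.mpr (Set.range_subset_iff.mpr h)
  exact hle hY

end TraceForm

section Povm

variable [DecidableEq n]

open scoped Matrix.Norms.L2Operator MatrixOrder in
theorem IsHermitian.posDef_add_smul_one {H : Matrix n n ℂ} (hH : H.IsHermitian) {c : ℝ}
    (hc : ‖H‖ < c) : (H + c • (1 : Matrix n n ℂ)).PosDef := by
  have hpsd : (H + ‖H‖ • (1 : Matrix n n ℂ)).PosSemidef := by
    have := hH.isSelfAdjoint.neg_algebraMap_norm_le_self
    rw [le_iff] at this
    simpa [Algebra.algebraMap_eq_smul_one] using this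
  have hpd : ((c - ‖H‖) • (1 : Matrix n n ℂ)).PosDef := PosDef.one.smul (sub_pos.mpr hc)
  simpa [sub_smul, add_assoc] using PosDef.posSemidef_add hpsd hpd

open scoped Matrix.Norms.L2Operator in
theorem exists_posDef_sum_eq_one_span_eq {ι : Type*} [Fintype ι] (K : ι → Matrix n n ℂ)
    (hK : ∀ i, (K i).IsHermitian) :
    ∃ F : Option ι → Matrix n n ℂ, (∀ k, (F k).PosDef) ∧ ∑ k, F k = 1 ∧
      Submodule.span ℂ (Set.range F) = Submodule.span ℂ (insert 1 (Set.range K)) := by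
  set c : ι → ℝ := fun i => ‖K i‖ + 1
  set P : ι → Matrix n n ℂ := fun i => K i + c i • 1
  set S := ∑ i, P i
  set t : ℝ := ‖-S‖ + 1
  have hP : ∀ i, (P i).PosDef := fun i => (hK i).posDef_add_smul_one (lt_add_one _)
  have hS : (-S + t • 1).PosDef :=
    IsHermitian.posDef_add_smul_one (isSelfAdjoint_sum _ fun i _ => (hP i).isHermitian).neg
      (lt_add_one _)
  have ht : 0 < t := by positivity
  set F : Option ι → Matrix n n ℂ := fun k => t⁻¹ • Option.elim k (-S + t • 1) P with hF
  have hsum : ∑ k, F k = 1 := by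
    rw [Fintype.sum_option, ← Finset.smul_sum]
    simp only [hF, Option.elim_none, Option.elim_some, ← smul_add]
    rw [add_comm (-S), neg_add_cancel_right, smul_smul, inv_mul_cancel₀ ht.ne', one_smul]
  refine ⟨F, fun k => ?_, hsum, le_antisymm ?_ ?_⟩
  · cases k
    exacts [hS.smul (inv_pos.mpr ht), (hP _).smul (inv_pos.mpr ht)]
  · set V := Submodule.span ℂ (insert 1 (Set.range K))
    have h1V : (1 : Matrix n n ℂ) ∈ V := Submodule.subset_span (Set.mem_insert _ _)
    have hPV : ∀ i, P i ∈ V := fun i =>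
      add_mem (Submodule.subset_span (Set.mem_insert_of_mem _ ⟨i, rfl⟩))
        (Submodule.smul_of_tower_mem _ _ h1V)
    rw [Submodule.span_le, Set.range_subset_iff]
    rintro (_ | i)
    · exact Submodule.smul_of_tower_mem _ _
        (add_mem (neg_mem (sum_mem fun i _ => hPV i)) (Submodule.smul_of_tower_mem _ _ h1V))
    · exact Submodule.smul_of_tower_mem _ _ (hPV i)
  · have h1F : (1 : Matrix n n ℂ) ∈ Submodule.span ℂ (Set.range F) :=
      hsum ▸ sum_mem fun k _ => Submodule.subset_span ⟨k, rfl⟩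
    rw [Submodule.span_le, Set.insert_subset_iff, Set.range_subset_iff]
    refine ⟨h1F, fun i => ?_⟩
    have hKi : K i = t • F (some i) - c i • 1 := by
      simp only [hF, P, Option.elim_some, smul_smul, mul_inv_cancel₀ ht.ne', one_smul,
        add_sub_cancel_right]
    rw [hKi]
    exact sub_mem (Submodule.smul_of_tower_mem _ _ (Submodule.subset_span ⟨_, rfl⟩))
      (Submodule.smul_of_tower_mem _ _ h1F)

end Povm

section Holevo

variable {𝕜 : Type*} [RCLike 𝕜]

theorem IsHermitian.trace_mul_conjTranspose {α : Type*} [CommRing α] [StarRing α]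
    {F : Matrix n n α} (hF : F.IsHermitian) (X : Matrix n n α) :
    (F * Xᴴ).trace = star (F * X).trace := by
  rw [← trace_conjTranspose, conjTranspose_mul, hF.eq, trace_mul_comm]

theorem PosSemidef.inv_trace_smul {A : Matrix n n 𝕜} (hA : A.PosSemidef) :
    (A.trace⁻¹ • A).PosSemidef :=
  hA.smul (inv_nonneg.mpr hA.trace_nonneg)

theorem trace_inv_trace_smul {K : Type*} [Field K] {A : Matrix n n K} (hA : A.trace ≠ 0) :
    (A.trace⁻¹ • A).trace = 1 := by
  rw [trace_smul, smul_eq_mul, inv_mul_cancel₀ hA]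

theorem sum_trace_mul_smul_inv_trace_smul_eq_zero_iff {ι : Type*} [Fintype ι]
    {F : ι → Matrix n n 𝕜} (hF : ∀ k, (F k).PosSemidef) (X : Matrix n n 𝕜) :
    ∑ k, (F k * X).trace • ((F k).trace⁻¹ • F k) = 0 ↔ ∀ k, (F k * X).trace = 0 := by
  refine ⟨fun h => ?_, fun h => by simp [h]⟩
  set z := fun k => (F k * X).trace
  have hpair : ((∑ k, z k • ((F k).trace⁻¹ • F k)) * Xᴴ).trace
      = ∑ k, (F k).trace⁻¹ * (star (z k) * z k) := by
    simp only [Finset.sum_mul, trace_sum, smul_mul_assoc, trace_smul,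
      (hF _).isHermitian.trace_mul_conjTranspose, smul_eq_mul]
    exact Finset.sum_congr rfl fun k _ => by ring
  have hterm_nonneg : ∀ k, 0 ≤ (F k).trace⁻¹ * (star (z k) * z k) := fun k =>
    mul_nonneg (inv_nonneg.mpr (hF k).trace_nonneg) (star_mul_self_nonneg _)
  rw [h, zero_mul, trace_zero, eq_comm,
    Finset.sum_eq_zero_iff_of_nonneg fun k _ => hterm_nonneg k] at hpair
  intro k
  rcases mul_eq_zero.mp (hpair k (Finset.mem_univ k)) with htr | hz
  · rw [inv_eq_zero, (hF k).trace_eq_zero_iff] at htr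
    simp [htr]
  · exact (CStarRing.star_mul_self_eq_zero_iff _).mp hz

end Holevo

end Matrix

/-- Every self-adjoint linear subspace `N` of the trace-zero matrices in
`M_n(ℂ)` is exactly the nullspace of some entanglement breaking quantum channel, given in
Holevo form `Φ(X) = Σ_k tr(F_k X) R_k` with `{F_k}` a POVM of nonzero positive operators
and `{R_k}` density matrices. -/
theorem exists_entanglementBreaking_with_nullspace {n : ℕ}
    (N : Submodule ℂ (Matrix (Fin n) (Fin n) ℂ))
    (hsa : ∀ X ∈ N, Xᴴ ∈ N)
    (htr0 : ∀ X ∈ N, X.trace = 0) :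
    ∃ (m : ℕ) (F R : Fin m → Matrix (Fin n) (Fin n) ℂ),
      (∀ k, (F k).PosSemidef) ∧ (∀ k, F k ≠ 0) ∧ (∑ k, F k = 1) ∧
      (∀ k, (R k).PosSemidef) ∧ (∀ k, (R k).trace = 1) ∧
      (∀ X : Matrix (Fin n) (Fin n) ℂ,
        (∑ k, (F k * X).trace • R k = 0) ↔ X ∈ N) := by
  classical
  rcases isEmpty_or_nonempty (Fin n) with hn | hn
  · exact ⟨0, Fin.elim0, Fin.elim0, fun k => k.elim0, fun k => k.elim0, Subsingleton.elim _ _,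
      fun k => k.elim0, fun k => k.elim0, fun X => by simp [Subsingleton.elim X 0]⟩
  obtain ⟨s, hs_sa, hs_span⟩ :=
    ((traceForm ℂ).orthogonal N).exists_finset_isSelfAdjoint_span_eq (IsNoetherian.noetherian _)
      fun _ => conjTranspose_mem_orthogonal_traceForm hsa
  obtain ⟨F, hF_pd, hF_sum, hF_span⟩ :=
    exists_posDef_sum_eq_one_span_eq (Subtype.val : s → Matrix (Fin n) (Fin n) ℂ)
      fun H => hs_sa _ H.2
  have h1 : (1 : Matrix (Fin n) (Fin n) ℂ) ∈ Submodule.span ℂ s :=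
    hs_span ▸ one_mem_orthogonal_traceForm_iff.mpr htr0
  have hF_span_eq : Submodule.span ℂ (Set.range F) = (traceForm ℂ).orthogonal N := by
    rw [hF_span, Subtype.range_coe, Submodule.span_insert_eq_span h1, hs_span]
  let e := (Fintype.equivFin (Option s)).symm
  refine ⟨_, F ∘ e, fun k => (F (e k)).trace⁻¹ • F (e k), fun k => (hF_pd _).posSemidef,
    fun k => (hF_pd _).isUnit.ne_zero, (e.sum_comp F).trans hF_sum,
    fun k => (hF_pd _).posSemidef.inv_trace_smul,
    fun k => trace_inv_trace_smul (hF_pd _).trace_pos.ne', fun X => ?_⟩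
  simp only [Function.comp_apply]
  rw [e.sum_comp (fun k => (F k * X).trace • ((F k).trace⁻¹ • F k)),
    sum_trace_mul_smul_inv_trace_smul_eq_zero_iff (fun k => (hF_pd k).posSemidef),
    ← orthogonal_traceForm_orthogonal N, ← hF_span_eq, mem_orthogonal_traceForm_span_range_iff]
end

section
/- Let E : M_d(ℂ) → M_r(ℂ) be a quantum channel whose range is contained in a diagonal algebra; that is, there is an orthonormal basis {u_1, …, u_r} of ℂ^r such that E(X) ∈ span{u_i u_i* : 1 ≤ i ≤ r} for all X ∈ M_d(ℂ). Then E has a Holevo form: there exist positive semidefinite matrices F_1, …, F_r ∈ M_d(ℂ) with Σ_{i=1}^r F_i = I_d such that E(X) = Σ_{i=1}^r tr(F_i X) u_i u_i* for all X; in particular E is entanglement breaking. -/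
/-!
Write `E X = ∑ₖ Vₖ X Vₖᴴ` and `Pᵢ = uᵢ uᵢᴴ`. The `Pᵢ` are mutually orthogonal rank-one
projections summing to `1`, so the coefficient of `E X` on `Pᵢ` is `tr (Pᵢ E X)`, which equals
`tr (E^*(Pᵢ) X)` for the dual map `E^*(A) = ∑ₖ Vₖᴴ A Vₖ`. Hence `Fᵢ = E^*(Pᵢ)` is a Holevo form:
each `Fᵢ` is positive as a congruence of `Pᵢ`, and `∑ᵢ Fᵢ = E^*(1) = ∑ₖ Vₖᴴ Vₖ = 1`.
-/

open Matrix ComplexOrder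

namespace Matrix

section Orthonormal

variable {n R : Type*} [Fintype n] [DecidableEq n] [CommRing R] [StarRing R]
  {u : n → n → R}

theorem sum_vecMulVec_self_star_eq_one
    (hu : ∀ i j, star (u i) ⬝ᵥ u j = if i = j then 1 else 0) :
    ∑ i, vecMulVec (u i) (star (u i)) = 1 := by
  set U : Matrix n n R := (of u)ᵀ
  have hUU : Uᴴ * U = 1 := by
    ext i j
    simpa [U, mul_apply, dotProduct, one_apply] using hu i j
  have hsum : ∑ i, vecMulVec (u i) (star (u i)) = U * Uᴴ := by
    ext a b
    simp [U, mul_apply, sum_apply, vecMulVec_apply]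
  rw [hsum, mul_eq_one_comm.mp hUU]

theorem trace_vecMulVec_self_star_mul_vecMulVec_self_star
    (hu : ∀ i j, star (u i) ⬝ᵥ u j = if i = j then 1 else 0) (i j : n) :
    trace (vecMulVec (u j) (star (u j)) * vecMulVec (u i) (star (u i))) =
      if i = j then 1 else 0 := by
  rw [vecMulVec_mul_vecMulVec, trace_vecMulVec, dotProduct_smul, dotProduct_comm (u j), hu, hu,
    smul_eq_mul]
  by_cases h : i = j <;> simp [h]

theorem trace_vecMulVec_self_star_mul_sum_smul
    (hu : ∀ i j, star (u i) ⬝ᵥ u j = if i = j then 1 else 0) (c : n → R) (j : n) :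
    trace (vecMulVec (u j) (star (u j)) * ∑ i, c i • vecMulVec (u i) (star (u i))) = c j := by
  simp [Matrix.mul_sum, trace_sum, trace_vecMulVec_self_star_mul_vecMulVec_self_star hu]

end Orthonormal

section Kraus

variable {ι m n R : Type*} [Fintype ι] [Fintype m]

def krausAdjoint [Semiring R] [StarRing R] (V : ι → Matrix m n R) (A : Matrix m m R) :
    Matrix n n R :=
  ∑ k, (V k)ᴴ * A * V k

theorem krausAdjoint_one [Semiring R] [StarRing R] [DecidableEq m] (V : ι → Matrix m n R) :
    krausAdjoint V 1 = ∑ k, (V k)ᴴ * V k := by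
  simp [krausAdjoint]

theorem sum_krausAdjoint [Semiring R] [StarRing R] {κ : Type*} [Fintype κ]
    (V : ι → Matrix m n R) (A : κ → Matrix m m R) :
    ∑ i, krausAdjoint V (A i) = krausAdjoint V (∑ i, A i) := by
  simp only [krausAdjoint, Matrix.mul_sum, Matrix.sum_mul]
  exact Finset.sum_comm

theorem trace_krausAdjoint_mul [Fintype n] [CommSemiring R] [StarRing R] (V : ι → Matrix m n R)
    (A : Matrix m m R) (X : Matrix n n R) :
    trace (krausAdjoint V A * X) = trace (A * ∑ k, V k * X * (V k)ᴴ) := by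
  simp only [krausAdjoint, Finset.sum_mul, Matrix.mul_sum, trace_sum]
  refine Finset.sum_congr rfl fun k _ => ?_
  rw [Matrix.mul_assoc, Matrix.mul_assoc, trace_mul_comm, Matrix.mul_assoc, Matrix.mul_assoc]

theorem posSemidef_krausAdjoint [Fintype n] [Ring R] [PartialOrder R] [StarRing R]
    [StarOrderedRing R] {A : Matrix m m R} (hA : A.PosSemidef) (V : ι → Matrix m n R) :
    (krausAdjoint V A).PosSemidef :=
  posSemidef_sum _ fun k _ => hA.conjTranspose_mul_mul_same (V k)

end Kraus

end Matrix

/-- **Lemma.** A quantum channel `E : M_d(ℂ) → M_r(ℂ)` whose range is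
contained in a diagonal algebra `span{u_i u_i*}` (with `{u_i}` an orthonormal basis of
`ℂ^r`) has a Holevo form `E(X) = Σ_i tr(F_i X) u_i u_i*` for a POVM `{F_i}`; in particular
`E` is entanglement breaking. -/
theorem channel_into_diagonal_algebra_is_entanglementBreaking {d r : ℕ}
    (E : Matrix (Fin d) (Fin d) ℂ → Matrix (Fin r) (Fin r) ℂ)
    (hE : ∃ (m : ℕ) (V : Fin m → Matrix (Fin r) (Fin d) ℂ),
      (∀ X, E X = ∑ i, V i * X * (V i)ᴴ) ∧ (∑ i, (V i)ᴴ * V i = 1))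
    (u : Fin r → (Fin r → ℂ))
    (hu : ∀ i j, star (u i) ⬝ᵥ u j = if i = j then (1 : ℂ) else 0)
    (hrange : ∀ X, E X ∈
      Submodule.span ℂ (Set.range fun i => Matrix.vecMulVec (u i) (star (u i)))) :
    ∃ F : Fin r → Matrix (Fin d) (Fin d) ℂ,
      (∀ i, (F i).PosSemidef) ∧ (∑ i, F i = 1) ∧
      (∀ X, E X = ∑ i, (F i * X).trace • Matrix.vecMulVec (u i) (star (u i))) := by
  obtain ⟨m, V, hVE, hV1⟩ := hE
  refine ⟨fun i => krausAdjoint V (vecMulVec (u i) (star (u i))),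
    fun i => posSemidef_krausAdjoint (posSemidef_vecMulVec_self_star _) V, ?_, fun X => ?_⟩
  · rw [sum_krausAdjoint, sum_vecMulVec_self_star_eq_one hu, krausAdjoint_one, hV1]
  · obtain ⟨c, hc⟩ := (Submodule.mem_span_range_iff_exists_fun ℂ).mp (hrange X)
    have hcoeff : ∀ i, (krausAdjoint V (vecMulVec (u i) (star (u i))) * X).trace = c i := by
      intro i
      rw [trace_krausAdjoint_mul, ← hVE, ← hc, trace_vecMulVec_self_star_mul_sum_smul hu]
    simp only [hcoeff, hc]
end

section
/- Let Φ : M_n(ℂ) → M_n(ℂ) be an entanglement breaking channel with rank-one Kraus operators {v_i w_i*}_{i=1}^d, and let P_1, …, P_r be mutually orthogonal projections summing to the identity, each in the multiplicative domain M_{Φ†} of the dual map Φ†. For 1 ≤ k ≤ r define W_k = span{ w_i : P_k v_i = v_i }. Then the subspaces W_1, …, W_r are mutually orthogonal and together span ℂ^n; equivalently, the orthogonal projections Q_k onto W_k are mutually orthogonal and Σ_{k=1}^r Q_k = I. -/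
open Matrix

namespace EBhelp

variable {n d : ℕ}

lemma vmv_mul (a b : Fin n → ℂ) (M : Matrix (Fin n) (Fin n) ℂ) :
    vecMulVec a b * M = vecMulVec a (b ᵥ* M) := by
  ext i j
  simp [mul_apply, vecMulVec_apply, vecMul, dotProduct, Finset.mul_sum, mul_assoc]

lemma mul_vmv (a b : Fin n → ℂ) (M : Matrix (Fin n) (Fin n) ℂ) :
    M * vecMulVec a b = vecMulVec (M *ᵥ a) b := by
  ext i j
  simp [mul_apply, vecMulVec_apply, mulVec, dotProduct, Finset.sum_mul, mul_assoc]

lemma vmv_vmv (a b c e : Fin n → ℂ) :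
    vecMulVec a b * vecMulVec c e = (b ⬝ᵥ c) • vecMulVec a e := by
  ext i j
  simp [mul_apply, vecMulVec_apply, dotProduct, Finset.sum_mul, Finset.mul_sum]
  ring_nf
  exact Finset.sum_congr rfl (by intros; ring)

lemma vmv_conjT (a b : Fin n → ℂ) :
    (vecMulVec a b)ᴴ = vecMulVec (star b) (star a) := by
  ext i j
  simp [conjTranspose_apply, vecMulVec_apply, mul_comm]

lemma vmv_mulVec (a b x : Fin n → ℂ) :
    vecMulVec a b *ᵥ x = (b ⬝ᵥ x) • a := by
  ext i
  simp only [mulVec, vecMulVec_apply, dotProduct, Pi.smul_apply, smul_eq_mul,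
    Finset.sum_mul]
  exact Finset.sum_congr rfl (by intros; ring)

lemma vmv_zero_left (b : Fin n → ℂ) :
    vecMulVec (0 : Fin n → ℂ) b = 0 := by
  ext i j; simp [vecMulVec_apply]

lemma sandwich (a b : Fin n → ℂ) (Z : Matrix (Fin n) (Fin n) ℂ) :
    vecMulVec a (star b) * Z * vecMulVec b (star a) =
      (star b ⬝ᵥ Z *ᵥ b) • vecMulVec a (star a) := by
  rw [vmv_mul, vmv_vmv, dotProduct_mulVec]

lemma dot_sum {r : ℕ} (x : Fin n → ℂ) (f : Fin r → Fin n → ℂ) :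
    x ⬝ᵥ (∑ k, f k) = ∑ k, x ⬝ᵥ f k := by
  simp only [dotProduct, Finset.sum_apply, Finset.mul_sum]
  rw [Finset.sum_comm]

lemma sum_mulVec' (f : Fin d → Matrix (Fin n) (Fin n) ℂ) (x : Fin n → ℂ) :
    (∑ i, f i) *ᵥ x = ∑ i, f i *ᵥ x := by
  ext j
  simp [mulVec, dotProduct, Matrix.sum_apply, Finset.sum_mul]
  rw [Finset.sum_comm]

end EBhelp

/-- **part of Lemma on multiplicative domains of EB channel duals.**
With `Φ(ρ) = Σ_i (w_i* ρ w_i) v_i v_i*` entanglement breaking, dual map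
`Φ†(X) = Σ_i (v_i* X v_i) w_i w_i*`, and `P_1, …, P_r` mutually orthogonal projections
summing to the identity, each in the multiplicative domain of `Φ†`, the subspaces
`W_k = span{ w_i : P_k v_i = v_i }` are mutually orthogonal and together span `ℂⁿ`. -/
theorem w_subspaces_orthogonal_and_spanning {n d r : ℕ}
    (Φ Φd : Matrix (Fin n) (Fin n) ℂ → Matrix (Fin n) (Fin n) ℂ)
    (v w : Fin d → (Fin n → ℂ))
    (hv : ∀ i, star (v i) ⬝ᵥ v i = 1)
    (hw : ∀ i, w i ≠ 0)
    (hTP : ∑ i, Matrix.vecMulVec (w i) (star (w i)) = 1)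
    (hΦ : ∀ X, Φ X = ∑ i, (star (w i) ⬝ᵥ (X *ᵥ w i)) • Matrix.vecMulVec (v i) (star (v i)))
    (hΦd : ∀ X, Φd X = ∑ i, (star (v i) ⬝ᵥ (X *ᵥ v i)) • Matrix.vecMulVec (w i) (star (w i)))
    (P : Fin r → Matrix (Fin n) (Fin n) ℂ)
    (hPherm : ∀ k, (P k)ᴴ = P k)
    (hPidem : ∀ k, P k * P k = P k)
    (hPorth : ∀ k l, k ≠ l → P k * P l = 0)
    (hPsum : ∑ k, P k = 1)
    (hPdom : ∀ k X, Φd (P k * X) = Φd (P k) * Φd X ∧ Φd (X * P k) = Φd X * Φd (P k))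
    (W : Fin r → Submodule ℂ (Fin n → ℂ))
    (hW : ∀ k, W k = Submodule.span ℂ {x | ∃ i, P k *ᵥ v i = v i ∧ x = w i}) :
    (∀ k l, k ≠ l → ∀ x ∈ W k, ∀ y ∈ W l, star x ⬝ᵥ y = 0) ∧
    (⨆ k, W k) = ⊤ := by
  classical
  set Q : Fin r → Matrix (Fin n) (Fin n) ℂ := fun k => Φd (P k) with hQdef
  -- sandwich form of the dual map
  have hΦd' : ∀ X : Matrix (Fin n) (Fin n) ℂ,
      Φd X = ∑ i, vecMulVec (w i) (star (v i)) * X * vecMulVec (v i) (star (w i)) := by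
    intro X
    rw [hΦd X]
    exact Finset.sum_congr rfl fun i _ => (EBhelp.sandwich (w i) (v i) X).symm
  have hΦd1 : Φd 1 = 1 := by
    rw [hΦd]
    calc ∑ i, (star (v i) ⬝ᵥ (1 : Matrix (Fin n) (Fin n) ℂ) *ᵥ v i) •
            vecMulVec (w i) (star (w i))
        = ∑ i, vecMulVec (w i) (star (w i)) := by
          refine Finset.sum_congr rfl fun i _ => ?_
          rw [one_mulVec, hv i, one_smul]
      _ = 1 := hTP
  have hΦd0 : Φd 0 = 0 := by
    rw [hΦd]; simp
  have hQherm : ∀ k, (Q k)ᴴ = Q k := by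
    intro k
    show (Φd (P k))ᴴ = Φd (P k)
    rw [hΦd (P k), conjTranspose_sum]
    refine Finset.sum_congr rfl fun i _ => ?_
    rw [conjTranspose_smul, EBhelp.vmv_conjT, star_star]
    congr 1
    conv_lhs => rw [star_dotProduct]
    have hx : star (P k *ᵥ v i) ⬝ᵥ v i = star (v i) ⬝ᵥ P k *ᵥ v i := by
      rw [star_mulVec, hPherm]
      exact (dotProduct_mulVec _ _ _).symm
    rw [hx]
    exact star_star _
  have hQmul : ∀ k l, Q k * Q l = Φd (P k * P l) := fun k l => ((hPdom k (P l)).1).symm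
  have hQQ : ∀ k, Q k * Q k = Q k := by
    intro k; rw [hQmul, hPidem]
  have hQorth : ∀ k l, k ≠ l → Q k * Q l = 0 := by
    intro k l h; rw [hQmul, hPorth k l h, hΦd0]
  have hQsum : ∑ k, Q k = 1 := by
    calc ∑ k, Q k
        = ∑ k, ∑ i, (star (v i) ⬝ᵥ P k *ᵥ v i) • vecMulVec (w i) (star (w i)) :=
          Finset.sum_congr rfl fun k _ => hΦd (P k)
      _ = ∑ i, ∑ k, (star (v i) ⬝ᵥ P k *ᵥ v i) • vecMulVec (w i) (star (w i)) :=
          Finset.sum_comm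
      _ = ∑ i, vecMulVec (w i) (star (w i)) := by
          refine Finset.sum_congr rfl fun i _ => ?_
          rw [← Finset.sum_smul]
          have : ∑ k, star (v i) ⬝ᵥ P k *ᵥ v i = (1 : ℂ) := by
            rw [← EBhelp.dot_sum, ← EBhelp.sum_mulVec', hPsum, one_mulVec, hv]
          rw [this, one_smul]
      _ = 1 := hTP
  -- The intertwining relation coming from the multiplicative domain
  have hC : ∀ k i, P k * vecMulVec (v i) (star (w i)) = vecMulVec (v i) (star (w i)) * Q k := by
    intro k i0
    set M : Fin d → Matrix (Fin n) (Fin n) ℂ := fun i => vecMulVec (v i) (star (w i)) with hM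
    set C : Fin d → Matrix (Fin n) (Fin n) ℂ := fun i => P k * M i - M i * Q k with hCdef
    have hsum : ∑ i, (C i)ᴴ * C i = 0 := by
      have expand : ∀ i, (C i)ᴴ * C i =
          vecMulVec (w i) (star (v i)) * (P k * P k) * M i
          - (vecMulVec (w i) (star (v i)) * P k * M i) * Q k
          - Q k * (vecMulVec (w i) (star (v i)) * P k * M i)
          + Q k * (vecMulVec (w i) (star (v i)) * 1 * M i) * Q k := by
        intro i
        have hMH : (M i)ᴴ = vecMulVec (w i) (star (v i)) := by
          rw [hM]; simp only; rw [EBhelp.vmv_conjT, star_star]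
        rw [hCdef]
        simp only
        rw [conjTranspose_sub, conjTranspose_mul, conjTranspose_mul, hPherm, hQherm, hMH]
        noncomm_ring
      have step : ∑ i, (C i)ᴴ * C i =
          Φd (P k * P k) - Φd (P k) * Q k - Q k * Φd (P k) + Q k * Φd 1 * Q k := by
        rw [hΦd' (P k * P k), hΦd' (P k), hΦd' 1]
        rw [Finset.sum_mul, Finset.mul_sum, Finset.mul_sum, Finset.sum_mul,
          ← Finset.sum_sub_distrib, ← Finset.sum_sub_distrib, ← Finset.sum_add_distrib]
        exact Finset.sum_congr rfl fun i _ => expand i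
      rw [step, hPidem, hΦd1, mul_one]
      show Q k - Q k * Q k - Q k * Q k + Q k * Q k = 0
      rw [hQQ]
      abel
    -- a sum of positive semidefinite matrices vanishing forces each term to vanish
    have hCzero : ∀ i m j, C i m j = 0 := by
      intro i m j
      have h : (∑ i, (C i)ᴴ * C i) j j = 0 := by rw [hsum]; simp
      have h' : ∑ i, ∑ m', ((Complex.normSq (C i m' j) : ℂ)) = 0 := by
        rw [← h]
        rw [Matrix.sum_apply]
        refine (Finset.sum_congr rfl fun i _ => ?_).symm
        rw [Matrix.mul_apply]
        refine Finset.sum_congr rfl fun m' _ => ?_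
        rw [conjTranspose_apply, Complex.normSq_eq_conj_mul_self]
        rfl
      have h'' : ∑ i, ∑ m', Complex.normSq (C i m' j) = 0 := by
        exact_mod_cast h'
      have h1 : ∀ i ∈ (Finset.univ : Finset (Fin d)),
          ∑ m', Complex.normSq (C i m' j) = 0 :=
        (Finset.sum_eq_zero_iff_of_nonneg
          (fun i _ => Finset.sum_nonneg fun m' _ => Complex.normSq_nonneg _)).1 h''
      have h2 := (Finset.sum_eq_zero_iff_of_nonneg
        (fun m' _ => Complex.normSq_nonneg _)).1 (h1 i (Finset.mem_univ i)) m
        (Finset.mem_univ m)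
      exact Complex.normSq_eq_zero.1 h2
    have : C i0 = 0 := by ext m j; exact hCzero i0 m j
    have := sub_eq_zero.1 this
    exact this
  have hvne : ∀ i, v i ≠ 0 := by
    intro i hvi
    have := hv i
    rw [hvi] at this
    simp at this
  have hwc : ∀ i, star (w i) ⬝ᵥ w i ≠ 0 := by
    intro i h
    apply hw i
    have h0 : ∑ m', ((Complex.normSq (w i m') : ℂ)) = 0 := by
      rw [← h]
      refine Finset.sum_congr rfl fun m' _ => ?_
      rw [Pi.star_apply, Complex.normSq_eq_conj_mul_self]
      rfl
    have h1 : ∑ m', Complex.normSq (w i m') = 0 := by exact_mod_cast h0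
    funext m
    exact Complex.normSq_eq_zero.1
      ((Finset.sum_eq_zero_iff_of_nonneg fun m' _ => Complex.normSq_nonneg _).1 h1 m
        (Finset.mem_univ m))
  -- each v i is either killed or fixed by each P k
  have heig : ∀ k i, P k *ᵥ v i = 0 ∨ P k *ᵥ v i = v i := by
    intro k i
    have h1 := congrArg (fun A => A *ᵥ (w i)) (hC k i)
    rw [← mulVec_mulVec, ← mulVec_mulVec, EBhelp.vmv_mulVec, EBhelp.vmv_mulVec,
      mulVec_smul] at h1
    set c : ℂ := star (w i) ⬝ᵥ w i with hc
    set μ : ℂ := star (w i) ⬝ᵥ Q k *ᵥ w i with hμ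
    have h2 : P k *ᵥ v i = (c⁻¹ * μ) • v i := by
      have h3 := congrArg (fun x => c⁻¹ • x) h1
      simp only [smul_smul] at h3
      rw [inv_mul_cancel₀ (hwc i), one_smul] at h3
      exact h3
    set lam : ℂ := c⁻¹ * μ with hlam
    have h4 : (lam * lam) • v i = lam • v i := by
      have h5 : P k *ᵥ (P k *ᵥ v i) = P k *ᵥ v i := by
        rw [mulVec_mulVec, hPidem]
      rw [h2, mulVec_smul, h2, smul_smul] at h5
      exact h5
    have h6 : lam * lam = lam := by
      have h7 : (lam * lam - lam) • v i = 0 := by rw [sub_smul, h4, sub_self]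
      rcases smul_eq_zero.1 h7 with h8 | h8
      · exact sub_eq_zero.1 h8
      · exact absurd h8 (hvne i)
    rcases mul_eq_zero.1 (by rw [mul_sub, mul_one, h6, sub_self] : lam * (lam - 1) = 0)
      with h9 | h9
    · left; rw [h2, h9, zero_smul]
    · right; rw [h2, sub_eq_zero.1 h9, one_smul]
  -- every i is fixed by some k
  have hexists : ∀ i, ∃ k, P k *ᵥ v i = v i := by
    intro i
    by_contra hcon
    push_neg at hcon
    have hall : ∀ k, P k *ᵥ v i = 0 := fun k => (heig k i).resolve_right (hcon k)
    have : v i = 0 := by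
      have := EBhelp.sum_mulVec' P (v i)
      rw [hPsum, one_mulVec] at this
      rw [this]
      exact Finset.sum_eq_zero fun k _ => hall k
    exact hvne i this
  -- if v i is fixed by P k, then w i is killed by Q l for l ≠ k
  have hQw0 : ∀ k l i, l ≠ k → P k *ᵥ v i = v i → Q l *ᵥ w i = 0 := by
    intro k l i hlk hki
    have hPl : P l *ᵥ v i = 0 := by
      rw [← hki, mulVec_mulVec, hPorth l k hlk, zero_mulVec]
    have h0 : vecMulVec (v i) (star (w i)) * Q l = 0 := by
      rw [← hC l i, EBhelp.mul_vmv, hPl, EBhelp.vmv_zero_left]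
    rw [EBhelp.vmv_mul] at h0
    obtain ⟨m, hm⟩ := Function.ne_iff.1 (hvne i)
    have hrow : star (w i) ᵥ* Q l = 0 := by
      funext j
      have := congrFun (congrFun h0 m) j
      simp only [vecMulVec_apply, Matrix.zero_apply] at this
      have := (mul_eq_zero.1 this).resolve_left hm
      simpa using this
    have := congrArg star hrow
    rw [star_vecMul, hQherm, star_star] at this
    simpa using this
  have hQw1 : ∀ k i, P k *ᵥ v i = v i → Q k *ᵥ w i = w i := by
    intro k i hki
    have hsum' : ∑ l, Q l *ᵥ w i = w i := by
      rw [← EBhelp.sum_mulVec', hQsum, one_mulVec]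
    rw [Finset.sum_eq_single k (fun l _ hl => hQw0 k l i hl hki)
      (fun h => absurd (Finset.mem_univ k) h)] at hsum'
    exact hsum'
  -- every element of W k is fixed by Q k
  have heigsp : ∀ k, ∀ x ∈ W k, Q k *ᵥ x = x := by
    intro k x hx
    rw [hW k] at hx
    refine Submodule.span_induction ?_ ?_ ?_ ?_ hx
    · rintro x ⟨i, hki, rfl⟩
      exact hQw1 k i hki
    · exact mulVec_zero _
    · intro x y _ _ hx hy
      rw [mulVec_add, hx, hy]
    · intro a x _ hx
      rw [mulVec_smul, hx]
  constructor
  · intro k l hkl x hx y hy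
    have hxq := heigsp k x hx
    have hyq := heigsp l y hy
    calc star x ⬝ᵥ y = star (Q k *ᵥ x) ⬝ᵥ (Q l *ᵥ y) := by rw [hxq, hyq]
      _ = (star x ᵥ* Q k) ⬝ᵥ (Q l *ᵥ y) := by rw [star_mulVec, hQherm]
      _ = star x ⬝ᵥ (Q k *ᵥ (Q l *ᵥ y)) := (dotProduct_mulVec _ _ _).symm
      _ = 0 := by rw [mulVec_mulVec, hQorth k l hkl, zero_mulVec, dotProduct_zero]
  · rw [eq_top_iff]
    intro x _
    have hx : x = ∑ i, (star (w i) ⬝ᵥ x) • w i := by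
      calc x = (1 : Matrix (Fin n) (Fin n) ℂ) *ᵥ x := (one_mulVec x).symm
        _ = (∑ i, vecMulVec (w i) (star (w i))) *ᵥ x := by rw [hTP]
        _ = ∑ i, vecMulVec (w i) (star (w i)) *ᵥ x := EBhelp.sum_mulVec' _ _
        _ = ∑ i, (star (w i) ⬝ᵥ x) • w i := by
            exact Finset.sum_congr rfl fun i _ => EBhelp.vmv_mulVec _ _ _
    rw [hx]
    refine Submodule.sum_mem _ fun i _ => Submodule.smul_mem _ _ ?_
    obtain ⟨k, hk⟩ := hexists i
    refine Submodule.mem_iSup_of_mem k ?_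
    rw [hW k]
    exact Submodule.subset_span ⟨i, hk, rfl⟩
end

section
/- Let Φ : M_n(ℂ) → M_n(ℂ) be an entanglement breaking channel with rank-one Kraus operators {v_i w_i*}_{i=1}^d, let P_1, …, P_r be mutually orthogonal projections summing to the identity, each in the multiplicative domain M_{Φ†} of the dual map Φ†, and let Q_k be the orthogonal projection onto W_k = span{ w_i : P_k v_i = v_i }. Then for every X ∈ M_n(ℂ): Φ(X) = Σ_{k=1}^r Φ(Q_k X Q_k) = Σ_{k=1}^r P_k Φ(X) P_k. -/
open Matrix

namespace EBAux

variable {n : ℕ}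

lemma mul_vecMulVec (M : Matrix (Fin n) (Fin n) ℂ) (a b : Fin n → ℂ) :
    M * vecMulVec a b = vecMulVec (M *ᵥ a) b := by
  ext p q
  simp [vecMulVec_apply, Matrix.mul_apply, mulVec, dotProduct, Finset.sum_mul, mul_assoc]

lemma vecMulVec_mul (M : Matrix (Fin n) (Fin n) ℂ) (a b : Fin n → ℂ) :
    vecMulVec a b * M = vecMulVec a (b ᵥ* M) := by
  ext p q
  simp [vecMulVec_apply, Matrix.mul_apply, vecMul, dotProduct, Finset.mul_sum, mul_assoc]

lemma vecMulVec_mulVec (a b x : Fin n → ℂ) :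
    vecMulVec a b *ᵥ x = (b ⬝ᵥ x) • a := by
  ext p
  simp only [mulVec, dotProduct, vecMulVec_apply, Pi.smul_apply, smul_eq_mul, Finset.sum_mul]
  exact Finset.sum_congr rfl fun q _ => by ring

lemma trace_vecMulVec (a b : Fin n → ℂ) : Matrix.trace (vecMulVec a b) = b ⬝ᵥ a := by
  simp [Matrix.trace, Matrix.diag, vecMulVec_apply, dotProduct, mul_comm]

lemma sum_mulVec {r : ℕ} (f : Fin r → Matrix (Fin n) (Fin n) ℂ) (x : Fin n → ℂ) :
    (∑ k, f k) *ᵥ x = ∑ k, f k *ᵥ x := by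
  ext p
  simp only [mulVec, dotProduct, Finset.sum_apply, Matrix.sum_apply, Finset.sum_mul]
  rw [Finset.sum_comm]

lemma dot_sum {r : ℕ} (a : Fin n → ℂ) (u : Fin r → (Fin n → ℂ)) :
    a ⬝ᵥ (∑ k, u k) = ∑ k, a ⬝ᵥ u k := by
  simp only [dotProduct, Finset.sum_apply, Finset.mul_sum]
  rw [Finset.sum_comm]

lemma dot_star_comm (a b : Fin n → ℂ) :
    star a ⬝ᵥ b = starRingEnd ℂ (star b ⬝ᵥ a) := by
  simp [dotProduct, map_sum, mul_comm]

lemma star_dot_self (a : Fin n → ℂ) :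
    star a ⬝ᵥ a = ((∑ p, Complex.normSq (a p) : ℝ) : ℂ) := by
  rw [Complex.ofReal_sum]
  simp [dotProduct, Complex.normSq_eq_conj_mul_self, Complex.star_def]

lemma dot_smul (a b : Fin n → ℂ) (c : ℂ) :
    a ⬝ᵥ (c • b) = c * (a ⬝ᵥ b) := by
  simp [dotProduct, Finset.mul_sum, mul_comm, mul_assoc, mul_left_comm]

lemma dot_mul_dot (a b : Fin n → ℂ) :
    (star a ⬝ᵥ b) * (star b ⬝ᵥ a) = (Complex.normSq (star a ⬝ᵥ b) : ℂ) := by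
  rw [dot_star_comm b a, Complex.mul_conj]

lemma normSq_sum_eq_zero {a : Fin n → ℂ} (h : ∑ p, Complex.normSq (a p) = 0) : a = 0 := by
  have := (Finset.sum_eq_zero_iff_of_nonneg (fun p _ => Complex.normSq_nonneg (a p))).mp h
  funext p
  exact Complex.normSq_eq_zero.mp (this p (Finset.mem_univ p))

lemma star_dot_self_eq_zero {a : Fin n → ℂ} (h : star a ⬝ᵥ a = 0) : a = 0 := by
  rw [star_dot_self] at h
  exact normSq_sum_eq_zero (by exact_mod_cast h)

end EBAux


/-- **Remark: block-diagonal decomposition of an EB channel.**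
With `Φ(ρ) = Σ_i (w_i* ρ w_i) v_i v_i*` entanglement breaking, dual map
`Φ†(X) = Σ_i (v_i* X v_i) w_i w_i*`, `P_1, …, P_r` mutually orthogonal projections summing
to the identity in the multiplicative domain of `Φ†`, and `Q_k` the orthogonal projection
onto `W_k = span{ w_i : P_k v_i = v_i }`, every `X` satisfies
`Φ(X) = Σ_k Φ(Q_k X Q_k) = Σ_k P_k Φ(X) P_k`. -/
theorem eb_channel_offdiagonal_blocks_annihilated {n d r : ℕ}
    (Φ Φd : Matrix (Fin n) (Fin n) ℂ → Matrix (Fin n) (Fin n) ℂ)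
    (v w : Fin d → (Fin n → ℂ))
    (hv : ∀ i, star (v i) ⬝ᵥ v i = 1)
    (hw : ∀ i, w i ≠ 0)
    (hTP : ∑ i, Matrix.vecMulVec (w i) (star (w i)) = 1)
    (hΦ : ∀ X, Φ X = ∑ i, (star (w i) ⬝ᵥ (X *ᵥ w i)) • Matrix.vecMulVec (v i) (star (v i)))
    (hΦd : ∀ X, Φd X = ∑ i, (star (v i) ⬝ᵥ (X *ᵥ v i)) • Matrix.vecMulVec (w i) (star (w i)))
    (P : Fin r → Matrix (Fin n) (Fin n) ℂ)
    (hPherm : ∀ k, (P k)ᴴ = P k)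
    (hPidem : ∀ k, P k * P k = P k)
    (hPorth : ∀ k l, k ≠ l → P k * P l = 0)
    (hPsum : ∑ k, P k = 1)
    (hPdom : ∀ k X, Φd (P k * X) = Φd (P k) * Φd X ∧ Φd (X * P k) = Φd X * Φd (P k))
    (Q : Fin r → Matrix (Fin n) (Fin n) ℂ)
    (hQherm : ∀ k, (Q k)ᴴ = Q k)
    (hQidem : ∀ k, Q k * Q k = Q k)
    (hQrange : ∀ k, LinearMap.range (Q k).mulVecLin
      = Submodule.span ℂ {x | ∃ i, P k *ᵥ v i = v i ∧ x = w i}) :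
    ∀ X : Matrix (Fin n) (Fin n) ℂ,
      Φ X = ∑ k, Φ (Q k * X * Q k) ∧ Φ X = ∑ k, P k * Φ X * P k := by
  classical
  -- real weights
  set ρ : Fin d → Fin r → ℝ := fun i k => ∑ p, Complex.normSq ((P k *ᵥ v i) p) with hρdef
  have hc_alt : ∀ i k, star (v i) ⬝ᵥ (P k *ᵥ v i) = star (P k *ᵥ v i) ⬝ᵥ (P k *ᵥ v i) := by
    intro i k
    rw [star_mulVec, hPherm, ← Matrix.dotProduct_mulVec, Matrix.mulVec_mulVec, hPidem]
  have hcρ : ∀ i k, star (v i) ⬝ᵥ (P k *ᵥ v i) = ((ρ i k : ℝ) : ℂ) := by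
    intro i k
    rw [hc_alt, EBAux.star_dot_self]
  have hρnn : ∀ i k, 0 ≤ ρ i k := fun i k =>
    Finset.sum_nonneg fun p _ => Complex.normSq_nonneg _
  have hρ0 : ∀ i k, ρ i k = 0 → P k *ᵥ v i = 0 := fun i k h =>
    EBAux.normSq_sum_eq_zero h
  -- Φd on the projections
  have hT : ∀ k, Φd (P k) = ∑ i, ((ρ i k : ℝ) : ℂ) • vecMulVec (w i) (star (w i)) := by
    intro k
    rw [hΦd]
    exact Finset.sum_congr rfl fun i _ => by rw [hcρ]
  have hΦd0 : Φd 0 = 0 := by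
    rw [hΦd]
    simp
  have hTT : ∀ k l, k ≠ l → Φd (P k) * Φd (P l) = 0 := by
    intro k l hkl
    have h1 := (hPdom k (P l)).1
    rw [hPorth k l hkl, hΦd0] at h1
    exact h1.symm
  -- the key orthogonality relations, from the trace of Φd(Pk)Φd(Pl)=0
  have key : ∀ k l, k ≠ l → ∀ i j,
      ρ i k * ρ j l * Complex.normSq (star (w i) ⬝ᵥ w j) = 0 := by
    intro k l hkl
    have htr : Matrix.trace (Φd (P k) * Φd (P l)) = 0 := by
      rw [hTT k l hkl, Matrix.trace_zero]
    have hexp : Matrix.trace (Φd (P k) * Φd (P l)) =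
        ((∑ i, ∑ j, ρ i k * ρ j l * Complex.normSq (star (w i) ⬝ᵥ w j) : ℝ) : ℂ) := by
      have hterm : ∀ i j, Matrix.trace ((((ρ i k : ℝ) : ℂ)) • vecMulVec (w i) (star (w i)) *
          ((((ρ j l : ℝ) : ℂ)) • vecMulVec (w j) (star (w j)))) =
          ((ρ i k * ρ j l * Complex.normSq (star (w i) ⬝ᵥ w j) : ℝ) : ℂ) := by
        intro i j
        rw [smul_mul_smul_comm, Matrix.trace_smul, EBAux.mul_vecMulVec,
          EBAux.vecMulVec_mulVec, EBAux.trace_vecMulVec, EBAux.dot_smul,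
          smul_eq_mul, EBAux.dot_mul_dot]
        push_cast
        ring
      rw [hT k, hT l, Finset.sum_mul_sum]
      simp only [Matrix.trace_sum]
      simp only [hterm, Complex.ofReal_sum]
    rw [htr] at hexp
    have hzero : ∑ i, ∑ j, ρ i k * ρ j l * Complex.normSq (star (w i) ⬝ᵥ w j) = 0 :=
      Complex.ofReal_eq_zero.mp hexp.symm
    have hnn : ∀ i j, 0 ≤ ρ i k * ρ j l * Complex.normSq (star (w i) ⬝ᵥ w j) := fun i j =>
      mul_nonneg (mul_nonneg (hρnn i k) (hρnn j l)) (Complex.normSq_nonneg _)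
    intro i j
    have h1 := (Finset.sum_eq_zero_iff_of_nonneg
      (fun i _ => Finset.sum_nonneg fun j _ => hnn i j)).mp hzero i (Finset.mem_univ i)
    exact (Finset.sum_eq_zero_iff_of_nonneg (fun j _ => hnn i j)).mp h1 j (Finset.mem_univ j)
  -- the weights sum to 1
  have hρsum : ∀ i, ∑ k, ρ i k = 1 := by
    intro i
    have h1 : (∑ k, ((ρ i k : ℝ) : ℂ)) = 1 := by
      have : (∑ k, ((ρ i k : ℝ) : ℂ)) = star (v i) ⬝ᵥ ((∑ k, P k) *ᵥ v i) := by
        rw [EBAux.sum_mulVec, EBAux.dot_sum]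
        exact (Finset.sum_congr rfl fun k _ => (hcρ i k)).symm
      rw [this, hPsum, Matrix.one_mulVec, hv i]
    rw [← Complex.ofReal_sum] at h1
    exact_mod_cast h1
  -- the block index of each i
  have hex : ∀ i, ∃ k, ρ i k ≠ 0 := by
    intro i
    by_contra h
    push_neg at h
    have := hρsum i
    rw [Finset.sum_eq_zero (fun k _ => h k)] at this
    norm_num at this
  choose κ hκ using hex
  have hρother : ∀ i k, k ≠ κ i → ρ i k = 0 := by
    intro i k hk
    have h0 := key k (κ i) hk i i
    have hpos : Complex.normSq (star (w i) ⬝ᵥ w i) ≠ 0 := by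
      rw [EBAux.star_dot_self, Complex.normSq_ofReal]
      intro h
      exact hw i (EBAux.normSq_sum_eq_zero (by nlinarith [mul_self_eq_zero.mp h]))
    have h1 : ρ i k * ρ i (κ i) = 0 := by
      rcases mul_eq_zero.mp h0 with h | h
      · exact h
      · exact absurd h hpos
    rcases mul_eq_zero.mp h1 with h | h
    · exact h
    · exact absurd h (hκ i)
  have hρκ : ∀ i, ρ i (κ i) = 1 := by
    intro i
    have := hρsum i
    rwa [Finset.sum_eq_single (κ i) (fun k _ hk => hρother i k hk)
      (fun h => absurd (Finset.mem_univ _) h)] at this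
  -- P acts on the v's
  have hPv : ∀ i, P (κ i) *ᵥ v i = v i := by
    intro i
    have h1 : star (v i) ⬝ᵥ (P (κ i) *ᵥ v i) = 1 := by
      rw [hcρ, hρκ]; norm_num
    have ha : star (P (κ i) *ᵥ v i) ⬝ᵥ (P (κ i) *ᵥ v i) = 1 := by
      rw [← hc_alt, h1]
    have hb : star (P (κ i) *ᵥ v i) ⬝ᵥ v i = 1 := by
      rw [star_mulVec, hPherm, ← Matrix.dotProduct_mulVec, h1]
    have h2 : star (P (κ i) *ᵥ v i - v i) ⬝ᵥ (P (κ i) *ᵥ v i - v i) = 0 := by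
      rw [star_sub, sub_dotProduct, dotProduct_sub, dotProduct_sub, ha, hb, h1, hv i]
      ring
    exact sub_eq_zero.mp (EBAux.star_dot_self_eq_zero h2)
  have hPv0 : ∀ i k, k ≠ κ i → P k *ᵥ v i = 0 := fun i k hk => hρ0 i k (hρother i k hk)
  have hκeq : ∀ i k, P k *ᵥ v i = v i → k = κ i := by
    intro i k hk
    by_contra h
    have h0 : v i = 0 := by rw [← hk, hρ0 i k (hρother i k h)]
    have := hv i
    rw [h0] at this
    simp at this
  -- orthogonality of w's across blocks
  have hwor : ∀ i j, κ i ≠ κ j → star (w i) ⬝ᵥ w j = 0 := by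
    intro i j hij
    have h0 := key (κ i) (κ j) hij i j
    rw [hρκ, hρκ, one_mul, one_mul] at h0
    exact Complex.normSq_eq_zero.mp h0
  -- Q acts on the w's
  have hQw1 : ∀ i, Q (κ i) *ᵥ w i = w i := by
    intro i
    have hmem : w i ∈ LinearMap.range (Q (κ i)).mulVecLin := by
      rw [hQrange]
      exact Submodule.subset_span ⟨i, hPv i, rfl⟩
    obtain ⟨y, hy⟩ := hmem
    rw [Matrix.mulVecLin_apply] at hy
    calc Q (κ i) *ᵥ w i = Q (κ i) *ᵥ (Q (κ i) *ᵥ y) := by rw [hy]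
      _ = (Q (κ i) * Q (κ i)) *ᵥ y := Matrix.mulVec_mulVec y _ _
      _ = Q (κ i) *ᵥ y := by rw [hQidem]
      _ = w i := hy
  have hQw0 : ∀ i k, k ≠ κ i → Q k *ᵥ w i = 0 := by
    intro i k hk
    have humem : Q k *ᵥ w i ∈ Submodule.span ℂ {x | ∃ j, P k *ᵥ v j = v j ∧ x = w j} := by
      rw [← hQrange]
      exact ⟨w i, by simp [Matrix.mulVecLin_apply]⟩
    have hdot : ∀ x ∈ Submodule.span ℂ {x | ∃ j, P k *ᵥ v j = v j ∧ x = w j},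
        star x ⬝ᵥ w i = 0 := by
      intro x hx
      induction hx using Submodule.span_induction with
      | mem x hx =>
        obtain ⟨j, hj, rfl⟩ := hx
        exact hwor j i (by rw [← hκeq j k hj]; exact hk)
      | zero => simp
      | add x y _ _ hx hy => rw [star_add, add_dotProduct, hx, hy, add_zero]
      | smul a x _ hx => rw [star_smul, smul_dotProduct, hx, smul_zero]
    have h1 : star (Q k *ᵥ w i) ⬝ᵥ w i = 0 := hdot _ humem
    have h2 : star (Q k *ᵥ w i) ⬝ᵥ (Q k *ᵥ w i) = 0 := by
      rw [star_mulVec, hQherm, ← Matrix.dotProduct_mulVec, Matrix.mulVec_mulVec, hQidem,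
        EBAux.dot_star_comm, h1, map_zero]
    exact EBAux.star_dot_self_eq_zero h2
  -- main statement
  intro X
  constructor
  · -- Q part
    have hcoef : ∀ k i, star (w i) ⬝ᵥ ((Q k * X * Q k) *ᵥ w i) =
        if k = κ i then star (w i) ⬝ᵥ (X *ᵥ w i) else 0 := by
      intro k i
      by_cases h : k = κ i
      · have hsw : star (w i) ᵥ* Q (κ i) = star (Q (κ i) *ᵥ w i) := by
          rw [star_mulVec, hQherm]
        rw [if_pos h, h, ← Matrix.mulVec_mulVec, hQw1, ← Matrix.mulVec_mulVec,
          Matrix.dotProduct_mulVec, hsw, hQw1]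
      · rw [if_neg h, ← Matrix.mulVec_mulVec, hQw0 i k h, Matrix.mulVec_zero,
          dotProduct_zero]
    rw [hΦ X]
    symm
    calc ∑ k, Φ (Q k * X * Q k)
        = ∑ k, ∑ i, (if k = κ i then star (w i) ⬝ᵥ (X *ᵥ w i) else 0) •
            vecMulVec (v i) (star (v i)) := by
          refine Finset.sum_congr rfl fun k _ => ?_
          rw [hΦ]
          exact Finset.sum_congr rfl fun i _ => by rw [hcoef k i]
      _ = ∑ i, ∑ k, (if k = κ i then star (w i) ⬝ᵥ (X *ᵥ w i) else 0) •
            vecMulVec (v i) (star (v i)) := Finset.sum_comm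
      _ = ∑ i, (star (w i) ⬝ᵥ (X *ᵥ w i)) • vecMulVec (v i) (star (v i)) := by
          refine Finset.sum_congr rfl fun i _ => ?_
          simp [ite_smul]
  · -- P part
    have hPVP : ∀ k i, P k * vecMulVec (v i) (star (v i)) * P k =
        if k = κ i then vecMulVec (v i) (star (v i)) else 0 := by
      intro k i
      have hbase : P k * vecMulVec (v i) (star (v i)) * P k =
          vecMulVec (P k *ᵥ v i) (star (P k *ᵥ v i)) := by
        rw [EBAux.mul_vecMulVec, EBAux.vecMulVec_mul, star_mulVec, hPherm]
      by_cases h : k = κ i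
      · rw [if_pos h, hbase, h, hPv]
      · rw [if_neg h, hbase, hPv0 i k h]
        ext p q
        simp [vecMulVec_apply]
    rw [hΦ X]
    symm
    calc ∑ k, P k * (∑ i, (star (w i) ⬝ᵥ (X *ᵥ w i)) • vecMulVec (v i) (star (v i))) * P k
        = ∑ k, ∑ i, (star (w i) ⬝ᵥ (X *ᵥ w i)) •
            (P k * vecMulVec (v i) (star (v i)) * P k) := by
          refine Finset.sum_congr rfl fun k _ => ?_
          rw [Finset.mul_sum, Finset.sum_mul]
          exact Finset.sum_congr rfl fun i _ => by
            rw [Matrix.mul_smul, Matrix.smul_mul]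
      _ = ∑ i, ∑ k, (star (w i) ⬝ᵥ (X *ᵥ w i)) •
            (if k = κ i then vecMulVec (v i) (star (v i)) else 0) := by
          rw [Finset.sum_comm]
          exact Finset.sum_congr rfl fun i _ => Finset.sum_congr rfl fun k _ => by
            rw [hPVP k i]
      _ = ∑ i, (star (w i) ⬝ᵥ (X *ᵥ w i)) • vecMulVec (v i) (star (v i)) := by
          refine Finset.sum_congr rfl fun i _ => ?_
          simp [smul_ite]
end

section
/- The Werner–Holevo channel Φ : M_3(ℂ) → M_3(ℂ), defined by Φ(X) = (1/2)(tr(X) I_3 − X^t) where X^t is the transpose of X, is a quantum channel that is not mixed unitary: there do not exist r ∈ ℕ, reals p_i > 0 with Σ_{i=1}^r p_i = 1, and unitaries U_i ∈ M_3(ℂ) such that Φ(X) = Σ_{i=1}^r p_i U_i X U_i* for all X ∈ M_3(ℂ). -/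
/-!
Pair both sides of a mixed-unitary decomposition `Φ(X) = ∑ pᵢ Uᵢ X Uᵢᴴ` of the Werner–Holevo
channel with `v` and `v̄` at `X = v vᴴ`. The left side is `½ (|v|⁴ - |v|⁴) = 0`, the right side is
`∑ pᵢ |vᵀ Uᵢ v|²`, so `vᵀ Uᵢ v = 0` for all `v`: every `Uᵢ` is antisymmetric, and an antisymmetric
matrix of odd size is singular, contradicting unitarity. The channel itself has the Kraus
operators `(Eᵢⱼ - Eⱼᵢ) / 2`, one for each ordered pair `(i, j)`.
-/

open Matrix

section Skew

variable {n R : Type*} [Fintype n] [DecidableEq n] [CommRing R]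

theorem transpose_eq_neg_of_dotProduct_mulVec_self_eq_zero {A : Matrix n n R}
    (hA : ∀ v, v ⬝ᵥ A *ᵥ v = 0) : Aᵀ = -A := by
  have hdiag (k : n) : A k k = 0 := by
    simpa [mulVec_single_one, single_one_dotProduct] using hA (Pi.single k 1)
  ext i j
  have h := hA (Pi.single i 1 + Pi.single j 1)
  simp only [mulVec_add, add_dotProduct, dotProduct_add, mulVec_single_one,
    single_one_dotProduct, col_apply, hdiag] at h
  rw [transpose_apply, neg_apply]
  linear_combination h

theorem det_eq_zero_of_transpose_eq_neg [NoZeroDivisors R] [CharZero R]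
    (hn : Odd (Fintype.card n)) {A : Matrix n n R} (hA : Aᵀ = -A) : A.det = 0 := by
  have h := congrArg det hA
  rw [det_transpose, det_neg, hn.neg_one_pow, neg_one_mul] at h
  exact self_eq_neg.mp h

end Skew

section QuadraticForm

variable {n R : Type*} [Fintype n] [CommRing R] [StarRing R]

theorem dotProduct_mul_vecMulVec_mul_conjTranspose_mulVec_star (M : Matrix n n R)
    (v : n → R) :
    v ⬝ᵥ (M * vecMulVec v (star v) * Mᴴ) *ᵥ star v = (v ⬝ᵥ M *ᵥ v) * star (v ⬝ᵥ M *ᵥ v) := by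
  rw [mul_vecMulVec, vecMulVec_mul, ← star_mulVec, vecMulVec_mulVec, star_dotProduct_star,
    op_smul_eq_smul, dotProduct_smul, smul_eq_mul, mul_comm]

theorem dotProduct_wernerHolevo_vecMulVec_mulVec_star [DecidableEq n] (c : R) (v : n → R) :
    v ⬝ᵥ (c • ((vecMulVec v (star v)).trace • (1 : Matrix n n R) - (vecMulVec v (star v))ᵀ))
      *ᵥ star v = 0 := by
  rw [trace_vecMulVec, transpose_vecMulVec, smul_mulVec, sub_mulVec, smul_mulVec, one_mulVec,
    vecMulVec_mulVec, op_smul_eq_smul, dotProduct_smul, dotProduct_sub, dotProduct_smul,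
    sub_self, smul_zero]

end QuadraticForm

theorem eq_zero_of_sum_mul_mul_conj_eq_zero {ι : Type*} [Fintype ι] {p : ι → ℝ}
    (hp : ∀ i, 0 < p i) {z : ι → ℂ} (h : ∑ i, (p i : ℂ) * (z i * star (z i)) = 0) (i : ι) :
    z i = 0 := by
  simp_rw [Complex.star_def, Complex.mul_conj, ← Complex.ofReal_mul, ← Complex.ofReal_sum,
    Complex.ofReal_eq_zero] at h
  have hi := (Finset.sum_eq_zero_iff_of_nonneg fun j _ =>
    mul_nonneg (hp j).le (Complex.normSq_nonneg _)).mp h i (Finset.mem_univ i)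
  simpa [(hp i).ne'] using hi

theorem dotProduct_mulVec_self_eq_zero_of_wernerHolevo_eq_sum {n ι : Type*} [Fintype n]
    [DecidableEq n] [Fintype ι] (c : ℂ) {p : ι → ℝ} (hp : ∀ i, 0 < p i)
    {U : ι → Matrix n n ℂ}
    (hΦ : ∀ X : Matrix n n ℂ,
      c • (X.trace • (1 : Matrix n n ℂ) - Xᵀ) = ∑ i, (p i : ℂ) • (U i * X * (U i)ᴴ))
    (i : ι) (v : n → ℂ) : v ⬝ᵥ U i *ᵥ v = 0 := by
  refine eq_zero_of_sum_mul_mul_conj_eq_zero (z := fun i => v ⬝ᵥ U i *ᵥ v) hp ?_ i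
  have h := dotProduct_wernerHolevo_vecMulVec_mulVec_star c v
  rw [hΦ, sum_mulVec, dotProduct_sum] at h
  simpa only [smul_mulVec, dotProduct_smul, smul_eq_mul,
    dotProduct_mul_vecMulVec_mul_conjTranspose_mulVec_star] using h

section Kraus

variable {n K : Type*} [DecidableEq n] [Field K]

def wernerHolevoKraus (ij : n × n) : Matrix n n K :=
  (1 / 2 : K) • (single ij.1 ij.2 1 - single ij.2 ij.1 1)

variable [StarRing K]

theorem conjTranspose_wernerHolevoKraus (ij : n × n) :
    (wernerHolevoKraus ij)ᴴ = wernerHolevoKraus (K := K) ij.swap := by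
  simp [wernerHolevoKraus, conjTranspose_single]

variable [Fintype n] [CharZero K]

theorem wernerHolevoKraus_mul_mul_conjTranspose (i j : n) (X : Matrix n n K) :
    wernerHolevoKraus (i, j) * X * (wernerHolevoKraus (i, j))ᴴ
      = (1 / 4 : K) • (single i i (X j j) - single i j (X j i) - single j i (X i j)
          + single j j (X i i)) := by
  simp only [wernerHolevoKraus, conjTranspose_smul, conjTranspose_sub, conjTranspose_single,
    star_one, star_div₀, star_ofNat, smul_mul_assoc, mul_smul_comm, sub_mul, mul_sub,
    single_mul_mul_single, one_mul, mul_one]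
  match_scalars <;> norm_num

theorem sum_wernerHolevoKraus_mul_mul_conjTranspose (X : Matrix n n K) :
    ∑ ij, wernerHolevoKraus ij * X * (wernerHolevoKraus ij)ᴴ
      = (1 / 2 : K) • (X.trace • (1 : Matrix n n K) - Xᵀ) := by
  simp only [Fintype.sum_prod_type, wernerHolevoKraus_mul_mul_conjTranspose]
  ext a b
  simp only [one_div, smul_add, smul_single, smul_eq_mul, Finset.sum_add_distrib, Matrix.sum_apply,
    Matrix.add_apply, Matrix.smul_apply, Matrix.sub_apply, single_apply, ite_and, ← Finset.mul_sum,
    Finset.sum_sub_distrib, Finset.sum_ite_irrel, Finset.sum_const_zero, Finset.sum_ite_eq',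
    Finset.mem_univ, ↓reduceIte, trace, diag_apply, one_apply, mul_ite, mul_one, mul_zero,
    transpose_apply]
  split_ifs <;> ring

theorem sum_conjTranspose_wernerHolevoKraus_mul :
    ∑ ij, (wernerHolevoKraus ij)ᴴ * wernerHolevoKraus ij
      = ((Fintype.card n - 1 : K) / 2) • (1 : Matrix n n K) := by
  calc ∑ ij, (wernerHolevoKraus ij)ᴴ * wernerHolevoKraus ij
      = ∑ ij : n × n, wernerHolevoKraus ij.swap * 1 * (wernerHolevoKraus (K := K) ij.swap)ᴴ := by
        simp [conjTranspose_wernerHolevoKraus]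
    _ = ∑ ij : n × n, wernerHolevoKraus ij * 1 * (wernerHolevoKraus (K := K) ij)ᴴ :=
        Fintype.sum_equiv (Equiv.prodComm n n) _ _ fun _ => rfl
    _ = ((Fintype.card n - 1 : K) / 2) • (1 : Matrix n n K) := by
        rw [sum_wernerHolevoKraus_mul_mul_conjTranspose, trace_one, transpose_one]
        module

end Kraus

/-- The Werner–Holevo channel `Φ(X) = ½(tr(X) I₃ - Xᵀ)` on `M₃(ℂ)`
is a quantum channel (it admits a Kraus representation) but is not mixed unitary. -/
theorem wernerHolevo_channel_not_mixedUnitary :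
    (∃ (d : ℕ) (V : Fin d → Matrix (Fin 3) (Fin 3) ℂ),
      (∀ X : Matrix (Fin 3) (Fin 3) ℂ,
        (1 / 2 : ℂ) • (X.trace • (1 : Matrix (Fin 3) (Fin 3) ℂ) - Xᵀ)
          = ∑ i, V i * X * (V i)ᴴ) ∧
      ∑ i, (V i)ᴴ * V i = 1) ∧
    ¬ ∃ (r : ℕ) (p : Fin r → ℝ) (U : Fin r → Matrix (Fin 3) (Fin 3) ℂ),
        (∀ i, 0 < p i) ∧ (∑ i, p i = 1) ∧
        (∀ i, U i ∈ Matrix.unitaryGroup (Fin 3) ℂ) ∧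
        (∀ X : Matrix (Fin 3) (Fin 3) ℂ,
          (1 / 2 : ℂ) • (X.trace • (1 : Matrix (Fin 3) (Fin 3) ℂ) - Xᵀ)
            = ∑ i, (p i : ℂ) • (U i * X * (U i)ᴴ)) := by
  constructor
  · let e := Fintype.equivFin (Fin 3 × Fin 3)
    refine ⟨_, fun k => wernerHolevoKraus (e.symm k), fun X => ?_, ?_⟩
    · rw [e.symm.sum_comp fun ij => wernerHolevoKraus ij * X * (wernerHolevoKraus ij)ᴴ,
        sum_wernerHolevoKraus_mul_mul_conjTranspose]
    · rw [e.symm.sum_comp fun ij => (wernerHolevoKraus ij)ᴴ * wernerHolevoKraus ij,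
        sum_conjTranspose_wernerHolevoKraus_mul]
      norm_num
  · rintro ⟨r, p, U, hp, hpsum, hU, hΦ⟩
    obtain ⟨i⟩ : Nonempty (Fin r) := by
      rcases r with _ | r
      · simp at hpsum
      · exact ⟨0⟩
    have hskew : (U i)ᵀ = -U i := transpose_eq_neg_of_dotProduct_mulVec_self_eq_zero
      (dotProduct_mulVec_self_eq_zero_of_wernerHolevo_eq_sum _ hp hΦ i)
    have hdet : (U i).det = 0 := det_eq_zero_of_transpose_eq_neg (by decide) hskew
    exact (UnitaryGroup.det_isUnit ⟨U i, hU i⟩).ne_zero hdet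
end
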